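/- Let y > 0 and a ≤ b be real numbers, and let γ : ℝ → ℍ be the horizontal (horocyclic) path γ(s) = s + y·i in the upper half-plane ℍ = {z ∈ ℂ : Im z > 0} with the hyperbolic distance dist(z, w) = 2·arsinh(|z − w| / (2·√(Im z · Im w))). Then the metric arc length of γ over [a, b], i.e. the total variation of γ on [a, b] (the supremum over finite partitions a = s₀ ≤ s₁ ≤ … ≤ s_m = b of Σ dist(γ(s_{j}), γ(s_{j+1}))), equals (b − a)/y. -/

import Mathlib

/-- The horizontal (horocyclic) path `s ↦ s + y·i` at height `y > 0` in the hyperbolic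
upper half-plane. -/
noncomputable def horoPath (y : ℝ) (hy : 0 < y) (s : ℝ) : UpperHalfPlane :=
  ⟨(s : ℂ) + (y : ℂ) * Complex.I, by simpa using hy⟩

/-!
Points of the horocycle `Im z = y` at Euclidean distance `d` are at hyperbolic distance
`2 arsinh (d / 2y)`. Since `arsinh x ≤ x`, the path is `y⁻¹`-Lipschitz, which bounds the length
by `(b - a) / y`. Conversely, the uniform partition of `[a, b]` into `n` pieces has length
`n · 2 arsinh ((b - a) / (2yn))`, which tends to `(b - a) / y` because `arsinh' 0 = 1`.
-/

open Filter Topology Set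

theorem Real.arsinh_le_self {x : ℝ} (hx : 0 ≤ x) : Real.arsinh x ≤ x := by
  rw [← Real.sinh_le_sinh, Real.sinh_arsinh]
  exact Real.self_le_sinh_iff.2 hx

theorem tendsto_nat_mul_apply_div {f : ℝ → ℝ} {f' : ℝ} (hf : HasDerivAt f f' 0) (hf0 : f 0 = 0)
    (c : ℝ) : Tendsto (fun n : ℕ => n * f (c / n)) atTop (𝓝 (c * f')) := by
  rcases eq_or_ne c 0 with rfl | hc
  · simp [hf0]
  have hcn : Tendsto (fun n : ℕ => c / n) atTop (𝓝[≠] 0) :=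
    tendsto_nhdsWithin_of_tendsto_nhds_of_eventually_within _
      (tendsto_const_div_atTop_nhds_zero_nat c)
      (eventually_ne_atTop 0 |>.mono fun n hn => by simp [hc, hn])
  refine ((hf.tendsto_slope_zero.comp hcn).const_mul c).congr' ?_
  filter_upwards [eventually_ne_atTop 0] with n hn
  simp only [Function.comp_apply, zero_add, hf0, sub_zero, smul_eq_mul]
  field_simp

theorem LipschitzOnWith.eVariationOn_Icc_le {E : Type*} [PseudoEMetricSpace E] {f : ℝ → E}
    {C : NNReal} {a b : ℝ} (hf : LipschitzOnWith C f (Icc a b)) :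
    eVariationOn f (Icc a b) ≤ C * ENNReal.ofReal (b - a) := by
  simpa using hf.comp_eVariationOn_le (mapsTo_id (Icc a b))

theorem eVariationOn.sum_uniform_le {E : Type*} [PseudoEMetricSpace E] (f : ℝ → E) {a b : ℝ}
    (hab : a ≤ b) (n : ℕ) :
    ∑ i ∈ Finset.range n, edist (f (a + (i + 1) * ((b - a) / n))) (f (a + i * ((b - a) / n)))
      ≤ eVariationOn f (Icc a b) := by
  have hδ : 0 ≤ (b - a) / n := div_nonneg (sub_nonneg.2 hab) n.cast_nonneg
  have hu : Monotone fun i : ℕ => a + i * ((b - a) / n) := fun i j hij => by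
    dsimp only; gcongr
  have hmem : ∀ i ≤ n, a + i * ((b - a) / n) ∈ Icc a b := fun i hi => by
    rcases n.eq_zero_or_pos with rfl | hn
    · simp_all
    have : (i : ℝ) * ((b - a) / n) ≤ b - a :=
      calc (i : ℝ) * ((b - a) / n) ≤ n * ((b - a) / n) := by gcongr
        _ = b - a := mul_div_cancel₀ _ (by positivity)
    constructor <;> nlinarith [mul_nonneg i.cast_nonneg hδ]
  simpa using eVariationOn.sum_le_of_monotoneOn_Iic (f := f) (hu.monotoneOn _) hmem

theorem horoPath_dist (y : ℝ) (hy : 0 < y) (s t : ℝ) :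
    dist (horoPath y hy s) (horoPath y hy t) = 2 * Real.arsinh (|s - t| / (2 * y)) := by
  have hcoe : dist (horoPath y hy s : ℂ) (horoPath y hy t) = |s - t| := by
    simp [horoPath, Complex.dist_eq, ← Complex.ofReal_sub]
  rw [UpperHalfPlane.dist_eq, hcoe]
  simp [horoPath, UpperHalfPlane.im, Real.sqrt_mul_self hy.le]

theorem lipschitzWith_horoPath (y : ℝ) (hy : 0 < y) :
    LipschitzWith (Real.toNNReal y⁻¹) (horoPath y hy) := by
  refine LipschitzWith.of_dist_le_mul fun s t => ?_
  rw [horoPath_dist, Real.coe_toNNReal _ (inv_nonneg.2 hy.le), Real.dist_eq]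
  calc 2 * Real.arsinh (|s - t| / (2 * y)) ≤ 2 * (|s - t| / (2 * y)) := by
        gcongr; exact Real.arsinh_le_self (by positivity)
    _ = y⁻¹ * |s - t| := by field_simp

theorem ofReal_nat_mul_arsinh_le_eVariationOn_horoPath (y : ℝ) (hy : 0 < y) {a b : ℝ}
    (hab : a ≤ b) (n : ℕ) :
    ENNReal.ofReal (n * (2 * Real.arsinh ((b - a) / (2 * y) / n)))
      ≤ eVariationOn (horoPath y hy) (Icc a b) := by
  refine le_trans (le_of_eq ?_) (eVariationOn.sum_uniform_le (horoPath y hy) hab n)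
  have hδ : 0 ≤ (b - a) / n := div_nonneg (sub_nonneg.2 hab) n.cast_nonneg
  have hstep (i : ℕ) : edist (horoPath y hy (a + (i + 1) * ((b - a) / n)))
      (horoPath y hy (a + i * ((b - a) / n)))
        = ENNReal.ofReal (2 * Real.arsinh ((b - a) / (2 * y) / n)) := by
    rw [edist_dist, horoPath_dist, add_sub_add_left_eq_sub, ← sub_mul, add_sub_cancel_left,
      one_mul, abs_of_nonneg hδ, div_right_comm]
  simp only [hstep, Finset.sum_const, Finset.card_range, nsmul_eq_mul]
  rw [ENNReal.ofReal_mul n.cast_nonneg, ENNReal.ofReal_natCast]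

/-- The hyperbolic arc length (total variation) of the horocyclic path `s ↦ s + y·i`
over `[a, b]` equals `(b - a)/y`. -/
theorem horoPath_length (y a b : ℝ) (hy : 0 < y) (hab : a ≤ b) :
    eVariationOn (horoPath y hy) (Set.Icc a b) = ENNReal.ofReal ((b - a) / y) := by
  apply le_antisymm
  · calc eVariationOn (horoPath y hy) (Icc a b)
        ≤ Real.toNNReal y⁻¹ * ENNReal.ofReal (b - a) :=
          ((lipschitzWith_horoPath y hy).lipschitzOnWith).eVariationOn_Icc_le
      _ = ENNReal.ofReal ((b - a) / y) := by
          rw [← ENNReal.ofReal_coe_nnreal, ← ENNReal.ofReal_mul (by positivity),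
            Real.coe_toNNReal _ (by positivity), inv_mul_eq_div]
  · have hderiv : HasDerivAt (fun x => 2 * Real.arsinh x) 2 0 := by
      simpa using (Real.hasDerivAt_arsinh 0).const_mul 2
    have hlim := tendsto_nat_mul_apply_div hderiv (by simp) ((b - a) / (2 * y))
    rw [show (b - a) / (2 * y) * 2 = (b - a) / y by field_simp] at hlim
    exact le_of_tendsto' (ENNReal.tendsto_ofReal hlim)
      (ofReal_nat_mul_arsinh_le_eVariationOn_horoPath y hy hab)
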